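/- Let P be the pullback in Cat of a cospan A → B ← C where f : C → B is an isofibration and A, B, C are each equivalent to discrete categories. Then P is equivalent to a discrete category. -/

import Mathlib

/-!
A category is equivalent to a discrete one exactly when it is thin and a groupoid: it is then
equivalent to the discrete category on its set of isomorphism classes. The pullback in `Cat` is
the strict pullback, whose morphisms are pairs of morphisms of `A` and `C` with the same image
in `B`; hence it is thin and a groupoid as soon as `A` and `C` are.
-/

open CategoryTheory Limits

universe u v

/-- A functor is an isofibration if every isomorphism in the target whose source is in
the image of the functor lifts to an isomorphism in the source. -/
def IsIsofibration {C : Type u} {D : Type v} [Category C] [Category D] (F : C ⥤ D) : Prop :=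
  ∀ (c : C) (d : D) (e : F.obj c ≅ d), ∃ (c' : C) (e' : c ≅ c') (h : F.obj c' = d),
    F.mapIso e' ≪≫ eqToIso h = e

/-- A category is homotopically discrete if it is equivalent to a discrete category. -/
def HoDiscrete (C : Type u) [Category.{v} C] : Prop :=
  ∃ S : Type u, Nonempty (C ≌ Discrete S)

namespace HoDiscrete

variable {C : Type u} [Category.{v} C]

theorem isThin (h : HoDiscrete C) : Quiver.IsThin C := by
  obtain ⟨S, ⟨e⟩⟩ := h
  exact fun X Y => ⟨fun φ ψ => e.functor.map_injective (Subsingleton.elim _ _)⟩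

theorem isGroupoid (h : HoDiscrete C) : IsGroupoid C := by
  obtain ⟨S, ⟨e⟩⟩ := h
  exact ⟨fun φ => isIso_of_reflects_iso φ e.functor⟩

theorem of_equivalence {D : Type u} [Category.{v} D] (e : C ≌ D) (h : HoDiscrete D) :
    HoDiscrete C := by
  obtain ⟨S, ⟨e'⟩⟩ := h
  exact ⟨S, ⟨e.trans e'⟩⟩

end HoDiscrete

def toIsomorphismClass (C : Type u) [Category.{v} C] [IsGroupoid C] :
    C ⥤ Discrete (Quotient (isIsomorphicSetoid C)) where
  obj X := ⟨Quotient.mk _ X⟩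
  map φ := Discrete.eqToHom (Quotient.sound ⟨asIso φ⟩)

theorem hoDiscrete_of_isThin_of_isGroupoid (C : Type u) [Category.{v} C] [Quiver.IsThin C]
    [IsGroupoid C] : HoDiscrete C := by
  let F := toIsomorphismClass C
  have : F.Faithful := ⟨fun {_ _} _ _ _ => Subsingleton.elim _ _⟩
  have : F.Full := ⟨fun {X Y} φ =>
    ⟨(Quotient.exact (Discrete.eq_of_hom φ) : IsIsomorphic X Y).some.hom,
      Subsingleton.elim _ _⟩⟩
  have : F.EssSurj := ⟨fun ⟨q⟩ => q.inductionOn fun X => ⟨X, ⟨Iso.refl _⟩⟩⟩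
  have : F.IsEquivalence := {}
  exact ⟨_, ⟨F.asEquivalence⟩⟩

@[ext]
structure StrictPullback {A B C : Type u} [Category.{v} A] [Category.{v} B] [Category.{v} C]
    (F : A ⥤ B) (G : C ⥤ B) where
  fst : A
  snd : C
  w : F.obj fst = G.obj snd

namespace StrictPullback

section

variable {A B C : Type u} [Category.{v} A] [Category.{v} B] [Category.{v} C]
  {F : A ⥤ B} {G : C ⥤ B}

@[ext]
structure Hom (X Y : StrictPullback F G) where
  fst : X.fst ⟶ Y.fst
  snd : X.snd ⟶ Y.snd
  w : F.map fst = eqToHom X.w ≫ G.map snd ≫ eqToHom Y.w.symm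

instance : Category.{v} (StrictPullback F G) where
  Hom := Hom
  id X := ⟨𝟙 _, 𝟙 _, by simp⟩
  comp φ ψ := ⟨φ.fst ≫ ψ.fst, φ.snd ≫ ψ.snd, by simp [ψ.w, φ.w]⟩

@[ext]
theorem hom_ext {X Y : StrictPullback F G} {φ ψ : X ⟶ Y} (h₁ : φ.fst = ψ.fst)
    (h₂ : φ.snd = ψ.snd) : φ = ψ :=
  Hom.ext h₁ h₂

@[simp]
theorem id_fst (X : StrictPullback F G) : Hom.fst (𝟙 X) = 𝟙 X.fst := rfl

@[simp]
theorem id_snd (X : StrictPullback F G) : Hom.snd (𝟙 X) = 𝟙 X.snd := rfl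

@[simp]
theorem comp_fst {X Y Z : StrictPullback F G} (φ : X ⟶ Y) (ψ : Y ⟶ Z) :
    (φ ≫ ψ).fst = φ.fst ≫ ψ.fst := rfl

@[simp]
theorem comp_snd {X Y Z : StrictPullback F G} (φ : X ⟶ Y) (ψ : Y ⟶ Z) :
    (φ ≫ ψ).snd = φ.snd ≫ ψ.snd := rfl

@[simp]
theorem eqToHom_fst {X Y : StrictPullback F G} (h : X = Y) :
    (eqToHom h).fst = eqToHom (congrArg StrictPullback.fst h) := by
  subst h; rfl

@[simp]
theorem eqToHom_snd {X Y : StrictPullback F G} (h : X = Y) :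
    (eqToHom h).snd = eqToHom (congrArg StrictPullback.snd h) := by
  subst h; rfl

instance [Quiver.IsThin A] [Quiver.IsThin C] : Quiver.IsThin (StrictPullback F G) :=
  fun _ _ => ⟨fun _ _ => hom_ext (Subsingleton.elim _ _) (Subsingleton.elim _ _)⟩

theorem isIso_of_isIso_fst_snd {X Y : StrictPullback F G} (φ : X ⟶ Y) [IsIso φ.fst]
    [IsIso φ.snd] : IsIso φ :=
  ⟨⟨⟨inv φ.fst, inv φ.snd, by simp [φ.w]⟩, by ext <;> simp, by ext <;> simp⟩⟩

instance [IsGroupoid A] [IsGroupoid C] : IsGroupoid (StrictPullback F G) :=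
  ⟨fun φ => isIso_of_isIso_fst_snd φ⟩

variable (F G)

def π₁ : StrictPullback F G ⥤ A where
  obj X := X.fst
  map φ := φ.fst

def π₂ : StrictPullback F G ⥤ C where
  obj X := X.snd
  map φ := φ.snd

theorem condition : π₁ F G ⋙ F = π₂ F G ⋙ G :=
  CategoryTheory.Functor.ext (fun X => X.w) (fun _ _ φ => φ.w)

variable {F G} {E : Type u} [Category.{v} E]

def lift (H : E ⥤ A) (K : E ⥤ C) (h : H ⋙ F = K ⋙ G) : E ⥤ StrictPullback F G where
  obj x := ⟨H.obj x, K.obj x, Functor.congr_obj h x⟩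
  map φ := ⟨H.map φ, K.map φ, Functor.congr_hom h φ⟩

theorem functor_ext {L L' : E ⥤ StrictPullback F G} (h₁ : L ⋙ π₁ F G = L' ⋙ π₁ F G)
    (h₂ : L ⋙ π₂ F G = L' ⋙ π₂ F G) : L = L' := by
  fapply CategoryTheory.Functor.ext
  · exact fun x => StrictPullback.ext (Functor.congr_obj h₁ x) (Functor.congr_obj h₂ x)
  · intro x y φ
    ext
    · simp only [comp_fst, eqToHom_fst]
      exact Functor.congr_hom h₁ φ
    · simp only [comp_snd, eqToHom_snd]
      exact Functor.congr_hom h₂ φ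

end

def isLimit {A B C : Cat.{u, u}} (g : A ⟶ B) (f : C ⟶ B) :
    IsLimit (PullbackCone.mk (W := Cat.of (StrictPullback g.toFunctor f.toFunctor))
      (π₁ _ _).toCatHom (π₂ _ _).toCatHom (Cat.Hom.ext (condition _ _))) :=
  PullbackCone.IsLimit.mk _
    (fun s => (lift (F := g.toFunctor) (G := f.toFunctor) s.fst.toFunctor s.snd.toFunctor
      (congrArg Cat.Hom.toFunctor s.condition)).toCatHom)
    (fun _ => rfl) (fun _ => rfl)
    (fun _ _ h₁ h₂ => Cat.Hom.ext
      (functor_ext (congrArg Cat.Hom.toFunctor h₁) (congrArg Cat.Hom.toFunctor h₂)))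

end StrictPullback

theorem pullback_of_hoDiscrete_along_isofibration_hoDiscrete_general
    (A B C : Cat.{u, u}) (g : A ⟶ B) (f : C ⟶ B)
    (hA : HoDiscrete ↥A) (hC : HoDiscrete ↥C) :
    HoDiscrete ↥(pullback g f) := by
  have := hA.isThin
  have := hA.isGroupoid
  have := hC.isThin
  have := hC.isGroupoid
  have hP := hoDiscrete_of_isThin_of_isGroupoid (StrictPullback g.toFunctor f.toFunctor)
  exact hP.of_equivalence (Cat.equivOfIso (limit.isoLimitCone ⟨_, StrictPullback.isLimit g f⟩))

theorem pullback_of_hoDiscrete_along_isofibration_hoDiscrete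
    (A B C : Cat.{u, u}) (g : A ⟶ B) (f : C ⟶ B)
    (hfib : IsIsofibration (f.toFunctor : ↥C ⥤ ↥B))
    (hA : HoDiscrete ↥A) (hB : HoDiscrete ↥B) (hC : HoDiscrete ↥C) :
    HoDiscrete ↥(pullback g f) :=
  pullback_of_hoDiscrete_along_isofibration_hoDiscrete_general A B C g f hA hC
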